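/- arXiv:0908.2603 — 2 statements merged into one kernel-verified Lean document; each statement's English description precedes it below -/
import Mathlib

section
/- Let H be a non-compact locally compact group whose identity component H₀ is compact, and let α be a topological group automorphism of H which contracts H (i.e. admits a compact vacuum subset). Then there exists a compact open subgroup V of H which is a vacuum subset for α. -/
/-!
Restricting the given compact vacuum to the points whose forward orbit never leaves its
closure yields a compact vacuum `C` with `α C ⊆ C`. The closures of the sets `αⁿ C` decrease
to a compact subgroup `K`: it is closed under products and inverses because `α^m (C * C)` and
`α^m C⁻¹` lie in `C` for large `m`, and by compactness every open neighbourhood of `K` contains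
some `αⁿ C`. Compactness of `H₀` gives a compact open neighbourhood `W` of `1` (components of
compact Hausdorff spaces are intersections of clopen sets), and the stabiliser of `K * W` is a
compact open subgroup containing `K`, hence some `αⁿ C`; so it is a vacuum.
-/

open Set Function Filter Topology
open scoped Pointwise

section Topology

variable {X : Type*} [TopologicalSpace X]

theorem exists_isCompact_isOpen_mem_of_isCompact_connectedComponent_of_t2Space
    [T2Space X] [WeaklyLocallyCompactSpace X] {x : X} (hx : IsCompact (connectedComponent x)) :
    ∃ W : Set X, IsCompact W ∧ IsOpen W ∧ x ∈ W := by
  obtain ⟨Q, hQ, hxQ⟩ := exists_compact_superset hx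
  have : CompactSpace Q := isCompact_iff_compactSpace.mp hQ
  let y : Q := ⟨x, interior_subset (hxQ mem_connectedComponent)⟩
  have hnhds : ∀ z ∈ ⋂ s : {s : Set Q // IsClopen s ∧ y ∈ s}, (s : Set Q),
      Subtype.val ⁻¹' interior Q ∈ 𝓝 z := by
    rw [← connectedComponent_eq_iInter_isClopen]
    intro z hz
    exact (isOpen_interior.preimage continuous_subtype_val).mem_nhds
      (hxQ (continuous_subtype_val.image_connectedComponent_subset y ⟨z, hz, rfl⟩))
  have hdir : Directed (· ⊇ ·) fun s : {s : Set Q // IsClopen s ∧ y ∈ s} ↦ (s : Set Q) :=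
    fun s t ↦
      ⟨⟨s.1 ∩ t.1, s.2.1.inter t.2.1, s.2.2, t.2.2⟩, inter_subset_left, inter_subset_right⟩
  have : Nonempty {s : Set Q // IsClopen s ∧ y ∈ s} := ⟨⟨univ, isClopen_univ, mem_univ y⟩⟩
  obtain ⟨⟨T, hT, hyT⟩, hTQ⟩ := exists_subset_nhds_of_isCompact' hdir
    (fun s ↦ s.2.1.isClosed.isCompact) (fun s ↦ s.2.1.isClosed) hnhds
  -- `T` is open in `Q` and lies in `interior Q`, hence is open in `X`.
  obtain ⟨O, hO, rfl⟩ := isOpen_induced_iff.mp hT.isOpen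
  refine ⟨Subtype.val '' (Subtype.val ⁻¹' O),
    hT.isClosed.isCompact.image continuous_subtype_val, ?_, ⟨y, hyT, rfl⟩⟩
  have hsub : Subtype.val '' (Subtype.val ⁻¹' O : Set Q) ⊆ interior Q :=
    image_subset_iff.mpr hTQ
  rw [← inter_eq_right.mpr hsub, Subtype.image_preimage_coe, ← inter_assoc,
    inter_eq_left.mpr interior_subset]
  exact isOpen_interior.inter hO

theorem SeparationQuotient.preimage_mk_singleton [R0Space X] (x : X) :
    mk ⁻¹' {mk x} = closure {x} := by
  ext y
  rw [mem_preimage, mem_singleton_iff, mk_eq_mk, ← specializes_iff_inseparable, specializes_comm,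
    specializes_iff_mem_closure]

theorem exists_isCompact_isOpen_mem_of_isCompact_connectedComponent
    [R1Space X] [LocallyCompactSpace X] {x : X} (hx : IsCompact (connectedComponent x)) :
    ∃ W : Set X, IsCompact W ∧ IsOpen W ∧ x ∈ W := by
  have := SeparationQuotient.isOpenQuotientMap_mk (X := X).locallyCompactSpace
  have hfibers : ∀ q : SeparationQuotient X, IsConnected (SeparationQuotient.mk ⁻¹' {q}) := by
    rintro ⟨y⟩
    exact SeparationQuotient.preimage_mk_singleton y ▸ isConnected_singleton.closure
  have hcomp := hx.image SeparationQuotient.continuous_mk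
  rw [SeparationQuotient.isQuotientMap_mk.isCoinducing.image_connectedComponent hfibers] at hcomp
  obtain ⟨W, hW, hWo, hxW⟩ :=
    exists_isCompact_isOpen_mem_of_isCompact_connectedComponent_of_t2Space hcomp
  exact ⟨_, SeparationQuotient.isInducing_mk.isCompact_preimage (by simp) hW,
    hWo.preimage SeparationQuotient.continuous_mk, hxW⟩

end Topology

section Vacuum

variable {X : Type*} [TopologicalSpace X] {f : X → X} {U V : Set X}

def IsVacuum (f : X → X) (U : Set X) : Prop :=
  ∀ M : Set X, IsCompact M → ∀ᶠ k in atTop, f^[k] '' M ⊆ U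

theorem IsVacuum.mem_of_isFixedPt (hU : IsVacuum f U) {x : X} (hx : IsFixedPt f x) : x ∈ U := by
  obtain ⟨k, hk⟩ := (hU {x} isCompact_singleton).exists
  rwa [image_singleton, (hx.iterate k).eq, singleton_subset_iff] at hk

theorem IsVacuum.of_image_iterate_subset (hU : IsVacuum f U) {n : ℕ} (hUV : f^[n] '' U ⊆ V) :
    IsVacuum f V := by
  intro M hM
  filter_upwards [(tendsto_sub_atTop_nat n).eventually (hU M hM), eventually_ge_atTop n]
    with k hk hnk
  rw [← Nat.add_sub_cancel' hnk, iterate_add, image_comp]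
  exact (image_mono hk).trans hUV

theorem IsVacuum.exists_isCompact_mapsTo [R1Space X] (hU : IsVacuum f U) (hf : Continuous f)
    (hUc : IsCompact U) : ∃ C : Set X, IsCompact C ∧ MapsTo f C C ∧ IsVacuum f C := by
  refine ⟨⋂ k, f^[k] ⁻¹' closure U, ?_, fun x hx ↦ ?_, fun M hM ↦ ?_⟩
  · exact hUc.closure.of_isClosed_subset
      (isClosed_iInter fun k ↦ isClosed_closure.preimage (hf.iterate k)) (iInter_subset _ 0)
  · exact mem_iInter.2 fun k ↦ by
      simpa only [mem_preimage, iterate_succ_apply] using mem_iInter.1 hx (k + 1)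
  · obtain ⟨N, hN⟩ := eventually_atTop.1 (hU M hM)
    refine eventually_atTop.2 ⟨N, fun k hk ↦ ?_⟩
    rintro _ ⟨x, hx, rfl⟩
    refine mem_iInter.2 fun j ↦ subset_closure ?_
    rw [← iterate_add_apply]
    exact hN (j + k) (by omega) (mem_image_of_mem _ hx)

end Vacuum

section Group

variable {G : Type*} [Group G] [TopologicalSpace G] [IsTopologicalGroup G]

theorem IsCompact.isOpen_stabilizer {L : Set G} (hL : IsCompact L) (hLo : IsOpen L) :
    IsOpen (MulAction.stabilizer G L : Set G) := by
  obtain ⟨T, hT, hTL⟩ := compact_open_separated_mul_left hL hLo subset_rfl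
  refine Subgroup.isOpen_of_mem_nhds _ (g := 1)
    (mem_of_superset (inter_mem hT (inv_mem_nhds_one G hT)) ?_)
  rintro g ⟨hg, hg'⟩
  have hgL : ∀ {h : G}, h ∈ T → h • L ⊆ L := fun hh ↦ (smul_set_subset_mul hh).trans hTL
  exact (hgL hg).antisymm (subset_smul_set_iff.2 (hgL hg'))

theorem exists_isCompact_isOpen_subgroup_ge {K : Subgroup G} (hK : IsCompact (K : Set G))
    {W : Set G} (hW : IsCompact W) (hWo : IsOpen W) (h1W : (1 : G) ∈ W) :
    ∃ V : Subgroup G, IsCompact (V : Set G) ∧ IsOpen (V : Set G) ∧ K ≤ V := by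
  set L := (K : Set G) * W
  have hVo := (hK.mul hW).isOpen_stabilizer hWo.mul_left
  have h1L : (1 : G) ∈ L := by simpa using mul_mem_mul K.one_mem h1W
  have hVL : (MulAction.stabilizer G L : Set G) ⊆ L := fun g hg ↦ by
    have := smul_mem_smul_set (a := g) h1L
    rwa [MulAction.mem_stabilizer_iff.1 hg, smul_eq_mul, mul_one] at this
  refine ⟨MulAction.stabilizer G L, (hK.mul hW).of_isClosed_subset
    (Subgroup.isClosed_of_isOpen _ hVo) hVL, hVo, fun k hk ↦ ?_⟩
  rw [MulAction.mem_stabilizer_iff, ← smul_mul_assoc, smul_coe_set hk]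

theorem IsVacuum.exists_isCompact_subgroup_image_iterate_subset {F : Type*} [FunLike F G G]
    [MonoidHomClass F G G] {f : F} {C : Set G} (hCv : IsVacuum f C) (hf : Continuous f)
    (hC : IsCompact C) (hfC : MapsTo f C C) :
    ∃ K : Subgroup G, IsCompact (K : Set G) ∧
      ∀ O : Set G, IsOpen O → (K : Set G) ⊆ O → ∃ n, (⇑f)^[n] '' C ⊆ O := by
  -- `G` need not be Hausdorff, so the compact sets `fⁿ C` are replaced by their closures.
  set D : ℕ → Set G := fun n ↦ closure ((⇑f)^[n] '' C)
  have hDc : ∀ n, IsCompact (D n) := fun n ↦ (hC.image (hf.iterate n)).closure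
  have hD : Antitone D := antitone_nat_of_succ_le fun n ↦ closure_mono <| by
    rw [iterate_succ, image_comp]
    exact image_mono hfC.image_subset
  obtain ⟨m, hm⟩ := (hCv _ (hC.mul hC)).exists
  obtain ⟨m', hm'⟩ := (hCv _ hC.inv).exists
  let K : Subgroup G :=
    { carrier := ⋂ n, D n
      mul_mem' := fun {x y} hx hy ↦ mem_iInter.2 fun n ↦
        map_mem_closure₂ continuous_mul (mem_iInter.1 hx (n + m)) (mem_iInter.1 hy (n + m)) <| by
          rintro _ ⟨a, ha, rfl⟩ _ ⟨b, hb, rfl⟩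
          refine ⟨_, hm (mem_image_of_mem _ (mul_mem_mul ha hb)), ?_⟩
          rw [← iterate_add_apply, iterate_map_mul]
      one_mem' := mem_iInter.2 fun n ↦
        subset_closure ⟨1, hCv.mem_of_isFixedPt (map_one f), iterate_map_one f n⟩
      inv_mem' := fun {x} hx ↦ mem_iInter.2 fun n ↦
        map_mem_closure continuous_inv (mem_iInter.1 hx (n + m')) <| by
          rintro _ ⟨a, ha, rfl⟩
          refine ⟨_, hm' (mem_image_of_mem _ (inv_mem_inv.2 ha)), ?_⟩
          rw [← iterate_add_apply, iterate_map_inv] }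
  refine ⟨K, (hDc 0).of_isClosed_subset (isClosed_iInter fun n ↦ isClosed_closure)
    (iInter_subset D 0), fun O hO hKO ↦ ?_⟩
  obtain ⟨n, hn⟩ := exists_subset_nhds_of_isCompact' hD.directed_ge hDc
    (fun n ↦ isClosed_closure) fun x hx ↦ hO.mem_nhds (hKO hx)
  exact ⟨n, subset_closure.trans hn⟩

end Group

theorem exists_compact_open_vacuum_subgroup_general
    {H : Type*} [Group H] [TopologicalSpace H] [IsTopologicalGroup H] [LocallyCompactSpace H]
    (hH0 : IsCompact (connectedComponent (1 : H)))
    (α : H ≃* H) (hα : Continuous ⇑α)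
    (hcontr : ∃ U : Set H, IsCompact U ∧ ∀ M : Set H, IsCompact M →
      ∃ N : ℕ, ∀ k ≥ N, (⇑α)^[k] '' M ⊆ U) :
    ∃ V : Subgroup H, IsCompact (V : Set H) ∧ IsOpen (V : Set H) ∧
      ∀ M : Set H, IsCompact M → ∃ N : ℕ, ∀ k ≥ N, (⇑α)^[k] '' M ⊆ (V : Set H) := by
  obtain ⟨U, hUc, hUv⟩ := hcontr
  have hU : IsVacuum α U := fun M hM ↦ eventually_atTop.2 (hUv M hM)
  obtain ⟨C, hCc, hαC, hCv⟩ := hU.exists_isCompact_mapsTo hα hUc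
  obtain ⟨K, hKc, hK⟩ := hCv.exists_isCompact_subgroup_image_iterate_subset hα hCc hαC
  obtain ⟨W, hWc, hWo, h1W⟩ := exists_isCompact_isOpen_mem_of_isCompact_connectedComponent hH0
  obtain ⟨V, hVc, hVo, hKV⟩ := exists_isCompact_isOpen_subgroup_ge hKc hWc hWo h1W
  obtain ⟨n, hn⟩ := hK V hVo hKV
  exact ⟨V, hVc, hVo, fun M hM ↦ eventually_atTop.1 <| hCv.of_image_iterate_subset hn M hM⟩

/-- If `H` is a non-compact locally compact group with compact identity component,
endowed with a contracting automorphism `α` (one admitting a compact vacuum subset),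
then there is a vacuum subset which is a compact open subgroup. -/
theorem exists_compact_open_vacuum_subgroup
    {H : Type*} [Group H] [TopologicalSpace H] [IsTopologicalGroup H] [LocallyCompactSpace H]
    (hnc : ¬ IsCompact (Set.univ : Set H))
    (hH0 : IsCompact (connectedComponent (1 : H)))
    (α : H ≃* H) (hα : Continuous ⇑α) (hα' : Continuous ⇑α.symm)
    (hcontr : ∃ U : Set H, IsCompact U ∧ ∀ M : Set H, IsCompact M →
      ∃ N : ℕ, ∀ k ≥ N, (⇑α)^[k] '' M ⊆ U) :
    ∃ V : Subgroup H, IsCompact (V : Set H) ∧ IsOpen (V : Set H) ∧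
      ∀ M : Set H, IsCompact M → ∃ N : ℕ, ∀ k ≥ N, (⇑α)^[k] '' M ⊆ (V : Set H) :=
  exists_compact_open_vacuum_subgroup_general hH0 α hα hcontr
end

section
/- Let G be a finite-dimensional real Lie group with finitely many connected components such that every compact normal subgroup of G is trivial. Then every compact subgroup of G that centralizes the identity component G₀ is trivial. -/
/-! Let `C` be the centralizer of `G₀`. It is normal, and its center contains `C ∩ G₀`, which has
finite index in `C` because `G ⧸ G₀` is finite; by Schur's theorem `⁅C, C⁆` is finite. Since `K`
centralizes `G₀`, the conjugate `g K g⁻¹` only depends on `g G₀`, so `K` has finitely many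
conjugates `K₁, …, Kₙ`, all compact and contained in `C`. They commute modulo `⁅C, C⁆`, hence
`⁅C, C⁆ ⊔ K₁ ⊔ ⋯ ⊔ Kₙ` is the product set `K₁ ⋯ Kₙ ⁅C, C⁆`: a compact normal subgroup containing
`K`, hence trivial. -/
open Subgroup
open scoped Pointwise commutatorElement

section Group

variable {G : Type*} [Group G]

lemma commutatorElement_mul_mul_of_mem_center (g h : G) {z w : G} (hz : z ∈ center G)
    (hw : w ∈ center G) : ⁅g * z, h * w⁆ = ⁅g, h⁆ := by
  rw [commutatorElement_mul_left_eq_conj_mul, commutatorElement_mul_right_eq_mul_conj g h w,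
    commutatorElement_eq_one_iff_commute.2 (mem_center_iff.1 hz _).symm,
    commutatorElement_eq_one_iff_commute.2 (mem_center_iff.1 hw g)]
  group

instance finite_commutatorSet_of_finiteIndex_center [(center G).FiniteIndex] :
    Finite (commutatorSet G) := by
  refine Set.Finite.to_subtype <|
    (Set.finite_range fun q : (G ⧸ center G) × (G ⧸ center G) => ⁅q.1.out, q.2.out⁆).subset ?_
  rintro _ ⟨g, h, rfl⟩
  obtain ⟨z, hz⟩ := QuotientGroup.mk_out_eq_mul (center G) g
  obtain ⟨w, hw⟩ := QuotientGroup.mk_out_eq_mul (center G) h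
  exact ⟨(g, h), by simp only [hz, hw, commutatorElement_mul_mul_of_mem_center g h z.2 w.2]⟩

instance Subgroup.finiteIndex_center_centralizer (H : Subgroup G) [H.FiniteIndex] :
    (center (centralizer (H : Set G))).FiniteIndex :=
  finiteIndex_of_le (H := H.subgroupOf _) fun x hx =>
    mem_center_iff.2 fun c => Subtype.ext (c.2 x hx).symm

lemma finite_commutator_centralizer (H : Subgroup G) [H.FiniteIndex] :
    ((⁅centralizer (H : Set G), centralizer (H : Set G)⁆ : Subgroup G) : Set G).Finite := by
  have : Finite (_root_.commutator (centralizer (H : Set G))) := inferInstance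
  rw [← map_subtype_commutator, coe_map]
  exact (Set.toFinite _).image _

lemma normalClosure_eq_iSup_conj_smul (H : Subgroup G) :
    normalClosure (H : Set G) = ⨆ g : G, MulAut.conj g • H := by
  refine le_antisymm ((closure_le _).2 fun x hx => ?_) (iSup_le fun g => ?_)
  · obtain ⟨h, hh, hconj⟩ := Group.mem_conjugatesOfSet_iff.1 hx
    obtain ⟨c, rfl⟩ := isConj_iff.1 hconj
    exact le_iSup (fun g : G => MulAut.conj g • H) c (smul_mem_pointwise_smul h _ H hh)
  · rintro _ ⟨h, hh, rfl⟩
    exact (normalClosure_normal (s := (H : Set G))).conj_mem h (le_normalClosure hh) g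

lemma conj_smul_le_of_mem_centralizer {K : Subgroup G} {h : G}
    (hh : h ∈ centralizer (K : Set G)) : MulAut.conj h • K ≤ K := by
  intro x hx
  obtain ⟨k, hk, rfl⟩ := (mem_smul_pointwise_iff_exists _ _ _).1 hx
  rwa [MulAut.smul_def, MulAut.conj_apply, ← hh k hk, mul_inv_cancel_right]

lemma conj_smul_eq_self_of_mem_centralizer {K : Subgroup G} {h : G}
    (hh : h ∈ centralizer (K : Set G)) : MulAut.conj h • K = K := by
  refine (conj_smul_le_of_mem_centralizer hh).antisymm ?_
  rw [subset_pointwise_smul_iff, ← map_inv]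
  exact conj_smul_le_of_mem_centralizer (inv_mem hh)

lemma finite_range_conj_smul_of_le_centralizer {H K : Subgroup G} [Finite (G ⧸ H)]
    (hK : K ≤ centralizer (H : Set G)) : (Set.range fun g : G => MulAut.conj g • K).Finite := by
  refine (Set.finite_range fun q : G ⧸ H => MulAut.conj q.out • K).subset ?_
  rintro _ ⟨g, rfl⟩
  obtain ⟨h, hh⟩ := QuotientGroup.mk_out_eq_mul H g
  refine ⟨g, ?_⟩
  simp only [hh, map_mul, mul_smul,
    conj_smul_eq_self_of_mem_centralizer (le_centralizer_iff.1 hK h.2)]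

end Group

section Topological

variable {G : Type*} [Group G] [TopologicalSpace G]

lemma IsCompact.conj_smul [ContinuousMul G] {K : Subgroup G} (hK : IsCompact (K : Set G)) (g : G) :
    IsCompact ((MulAut.conj g • K : Subgroup G) : Set G) := by
  rw [coe_pointwise_smul, ← Set.image_smul]
  exact hK.image (by simp only [MulAut.smul_def, MulAut.conj_apply]; fun_prop)

lemma isCompact_commutator_sup_sSup [ContinuousMul G] {C : Subgroup G}
    (hC : IsCompact ((⁅C, C⁆ : Subgroup G) : Set G)) {S : Set (Subgroup G)} (hS : S.Finite)
    (hSC : ∀ K ∈ S, K ≤ C) (hScompact : ∀ K ∈ S, IsCompact (K : Set G)) :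
    IsCompact ((⁅C, C⁆ ⊔ sSup S : Subgroup G) : Set G) := by
  induction S, hS using Set.Finite.induction_on with
  | empty => simpa using hC
  | @insert K S _ _ ih =>
    have hM : ⁅C, C⁆ ⊔ sSup S ≤ C :=
      sup_le (commutator_le_self C) (sSup_le fun L hL => hSC L (.inr hL))
    have hK : K ≤ normalizer (⁅C, C⁆ ⊔ sSup S : Subgroup G) :=
      le_normalizer_iff_commutator_le_right.2
        ((commutator_mono (hSC K (.inl rfl)) hM).trans le_sup_left)
    rw [sSup_insert, sup_left_comm, coe_mul_of_left_le_normalizer_right _ _ hK]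
    exact (hScompact K (.inl rfl)).mul
      (ih (fun L hL => hSC L (.inr hL)) fun L hL => hScompact L (.inr hL))

variable [IsTopologicalGroup G]

instance Subgroup.connectedComponentOfOne_normal : (connectedComponentOfOne G).Normal where
  conj_mem n hn g := by
    have hconj : Continuous fun x : G => g * x * g⁻¹ := by fun_prop
    show _ ∈ connectedComponent (1 : G)
    simpa using hconj.mapsTo_connectedComponent 1 hn

lemma connectedComponent_eq_iff_inv_mul_mem {a b : G} :
    connectedComponent a = connectedComponent b ↔ a⁻¹ * b ∈ connectedComponentOfOne G := by
  calc connectedComponent a = connectedComponent b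
      ↔ a • connectedComponent 1 = a • connectedComponent (a⁻¹ * b) := by
        rw [smul_connectedComponent, smul_connectedComponent, mul_one, mul_inv_cancel_left]
    _ ↔ connectedComponent (a⁻¹ * b) = connectedComponent 1 := by
        rw [← Set.image_smul, ← Set.image_smul,
          (Set.image_injective.2 (MulAction.injective a)).eq_iff, eq_comm]
    _ ↔ _ := connectedComponent_eq_iff_mem

def quotientConnectedComponentOfOneEquiv :
    G ⧸ connectedComponentOfOne G ≃ ConnectedComponents G :=
  Quotient.congr (.refl G) fun _ _ =>
    QuotientGroup.leftRel_apply.trans connectedComponent_eq_iff_inv_mul_mem.symm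

instance Subgroup.finiteIndex_connectedComponentOfOne [Finite (ConnectedComponents G)] :
    (connectedComponentOfOne G).FiniteIndex :=
  have := Finite.of_equiv _ (quotientConnectedComponentOfOneEquiv (G := G)).symm
  finiteIndex_of_finite_quotient

end Topological

theorem compact_subgroup_centralizing_identityComponent_trivial_general
    {G : Type*} [Group G] [TopologicalSpace G] [IsTopologicalGroup G]
    [Finite (ConnectedComponents G)]
    (htriv : ∀ N : Subgroup G, N.Normal → IsCompact (N : Set G) → N = ⊥) :
    ∀ K : Subgroup G, IsCompact (K : Set G) →
      (∀ k ∈ K, ∀ g ∈ connectedComponent (1 : G), k * g = g * k) → K = ⊥ := by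
  intro K hK hKG₀
  set C := centralizer (connectedComponentOfOne G : Set G)
  have hKC : K ≤ C := fun k hk g hg => (hKG₀ k hk g hg).symm
  have hconjC : ∀ g : G, MulAut.conj g • K ≤ C := fun g =>
    (pointwise_smul_le_pointwise_smul_iff.2 hKC).trans (Normal.conj_smul_eq_self g C).le
  have hM : IsCompact ((⁅C, C⁆ ⊔ normalClosure (K : Set G) : Subgroup G) : Set G) := by
    rw [normalClosure_eq_iSup_conj_smul, ← sSup_range]
    exact isCompact_commutator_sup_sSup
      (finite_commutator_centralizer (connectedComponentOfOne G)).isCompact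
      (finite_range_conj_smul_of_le_centralizer hKC)
      (Set.forall_mem_range.2 hconjC) (Set.forall_mem_range.2 hK.conj_smul)
  have hMbot := htriv _ inferInstance hM
  exact le_bot_iff.1 (hMbot ▸ le_normalClosure.trans le_sup_right)

/-- Let `G` be a finite-dimensional real Lie group with finitely many connected
components such that every compact normal subgroup of `G` is trivial. Then every
compact subgroup of `G` centralizing the identity component `G₀` is trivial. -/
theorem compact_subgroup_centralizing_identityComponent_trivial
    {E : Type*} [NormedAddCommGroup E] [NormedSpace ℝ E] [FiniteDimensional ℝ E]
    {G : Type*} [Group G] [TopologicalSpace G] [IsTopologicalGroup G] [ChartedSpace E G]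
    [LieGroup (modelWithCornersSelf ℝ E) (⊤ : ℕ∞) G]
    [Finite (ConnectedComponents G)]
    (htriv : ∀ N : Subgroup G, N.Normal → IsCompact (N : Set G) → N = ⊥) :
    ∀ K : Subgroup G, IsCompact (K : Set G) →
      (∀ k ∈ K, ∀ g ∈ connectedComponent (1 : G), k * g = g * k) → K = ⊥ :=
  compact_subgroup_centralizing_identityComponent_trivial_general htriv
end
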